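/- Let {n, t, b} be an orthonormal basis of ℝ³, M a real 3 × 3 matrix with trace M = 0, M · t = 0 and M · b = 0, μ > 0 a real number, q a real number, and Λ ∈ ℝ³. Define the stress jump matrix Σ = −q · I + μ · (M + Mᵀ). If Σ · n = −Λ, then q = ⟨Λ, n⟩. -/

import Mathlib

/-!
The trace of a matrix can be computed in any orthonormal basis, so for the basis `{n, t, b}`
we get `0 = tr M = n·Mn + t·Mt + b·Mb = n·Mn`. Since `n·(M + Mᵀ)n = 2 n·Mn`, the normal
component of the jump condition `Σ n = -Λ` reduces to `-q = -Λ·n`.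
-/

open Matrix

theorem Matrix.trace_eq_sum_star_dotProduct_mulVec_of_orthonormal {𝕜 ι κ : Type*} [RCLike 𝕜]
    [Fintype ι] [DecidableEq ι] [Fintype κ] (A : Matrix ι ι 𝕜)
    {v : κ → ι → 𝕜} (hv : Orthonormal 𝕜 fun i ↦ WithLp.toLp 2 (v i))
    (hcard : Fintype.card κ = Fintype.card ι) :
    A.trace = ∑ i, star (v i) ⬝ᵥ A *ᵥ v i := by
  have hspan := (hv.linearIndependent.span_eq_top_of_card_eq_finrank' (by simpa using hcard)).ge
  rw [← A.trace_toLin_eq (PiLp.basisFun 2 𝕜 ι), ← toLpLin_eq_toLin,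
    LinearMap.trace_eq_sum_inner _ (OrthonormalBasis.mk hv hspan)]
  simp [OrthonormalBasis.coe_mk, EuclideanSpace.inner_toLp_toLp, dotProduct_comm]

theorem Matrix.dotProduct_smul_one_add_smul_add_transpose_mulVec {R n : Type*} [CommRing R]
    [Fintype n] [DecidableEq n] (M : Matrix n n R) (q μ : R) (x : n → R) :
    x ⬝ᵥ (q • 1 + μ • (M + Mᵀ)) *ᵥ x = q * (x ⬝ᵥ x) + 2 * μ * (x ⬝ᵥ M *ᵥ x) := by
  simp only [add_mulVec, smul_mulVec, one_mulVec, dotProduct_add, dotProduct_smul,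
    mulVec_transpose, dotProduct_comm x (x ᵥ* M), ← dotProduct_mulVec, smul_eq_mul]
  ring

theorem pressure_jump_relation_general
    (n t b : Fin 3 → ℝ)
    (hON : Orthonormal ℝ (![WithLp.toLp 2 n, WithLp.toLp 2 t, WithLp.toLp 2 b] : Fin 3 → EuclideanSpace ℝ (Fin 3)))
    (M : Matrix (Fin 3) (Fin 3) ℝ)
    (htrace : M.trace = 0)
    (ht : M.mulVec t = 0) (hb : M.mulVec b = 0)
    (μ : ℝ) (q : ℝ) (Λ : Fin 3 → ℝ)
    (hjump : (-q • (1 : Matrix (Fin 3) (Fin 3) ℝ) + μ • (M + Mᵀ)).mulVec n = -Λ) :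
    q = Λ ⬝ᵥ n := by
  have hv : Orthonormal ℝ fun i ↦ WithLp.toLp 2 (![n, t, b] i) := by
    convert hON using 2 with i; fin_cases i <;> rfl
  have hnMn : n ⬝ᵥ M *ᵥ n = 0 := by
    simpa [Fin.sum_univ_three, ht, hb, htrace] using
      (M.trace_eq_sum_star_dotProduct_mulVec_of_orthonormal hv (by simp)).symm
  have hnn : n ⬝ᵥ n = 1 := by
    simpa only [EuclideanSpace.inner_toLp_toLp, star_trivial, Matrix.cons_val_zero, if_true] using
      orthonormal_iff_ite.mp hv 0 0
  have h := congrArg (n ⬝ᵥ ·) hjump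
  simp only [M.dotProduct_smul_one_add_smul_add_transpose_mulVec, hnn, hnMn, dotProduct_neg] at h
  rw [dotProduct_comm]; linarith

/-- Pressure jump relation: with `{n, t, b}` an orthonormal basis of `ℝ³`,
`M` a traceless matrix annihilating the tangents `t` and `b`, `μ > 0`,
and stress jump `Σ = -q • 1 + μ • (M + Mᵀ)`, the condition `Σ ⬝ n = -Λ`
implies `q = ⟨Λ, n⟩`. -/
theorem pressure_jump_relation
    (n t b : Fin 3 → ℝ)
    (hON : Orthonormal ℝ (![WithLp.toLp 2 n, WithLp.toLp 2 t, WithLp.toLp 2 b] : Fin 3 → EuclideanSpace ℝ (Fin 3)))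
    (M : Matrix (Fin 3) (Fin 3) ℝ)
    (htrace : M.trace = 0)
    (ht : M.mulVec t = 0) (hb : M.mulVec b = 0)
    (μ : ℝ) (hμ : 0 < μ) (q : ℝ) (Λ : Fin 3 → ℝ)
    (hjump : (-q • (1 : Matrix (Fin 3) (Fin 3) ℝ) + μ • (M + Mᵀ)).mulVec n = -Λ) :
    q = Λ ⬝ᵥ n :=
  pressure_jump_relation_general n t b hON M htrace ht hb μ q Λ hjump
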